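/- Let E be a directed graph whose only hereditary and saturated subsets of E^0 are ∅ and E^0. If E contains a closed path with no exit, then E is row-finite, i.e., s^{-1}(v) is finite for every vertex v ∈ E^0. -/

import Mathlib

/-- A directed graph `E = (E⁰, E¹, r, s)`: `V` is the vertex set `E⁰`, `Edg` is the
edge set `E¹`, and `s`, `r` give the source and range of each edge. -/
structure DGraph (V : Type*) (Edg : Type*) where
  s : Edg → V
  r : Edg → V

namespace DGraph

variable {V Edg : Type*}

/-- There is an edge from `v` to `w`. -/
def Adj (G : DGraph V Edg) (v w : V) : Prop := ∃ e, G.s e = v ∧ G.r e = w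

/-- There is a path (possibly of length zero, i.e. a vertex) from `v` to `w`. -/
def Reaches (G : DGraph V Edg) : V → V → Prop := Relation.ReflTransGen G.Adj

/-- A subset `X ⊆ E⁰` is hereditary if `r(e) ∈ X` whenever `s(e) ∈ X`. -/
def Hereditary (G : DGraph V Edg) (X : Set V) : Prop := ∀ e, G.s e ∈ X → G.r e ∈ X

/-- A vertex is a finite emitter if `s⁻¹(v)` is finite and nonempty. -/
def FiniteEmitter (G : DGraph V Edg) (v : V) : Prop :=
  {e | G.s e = v}.Finite ∧ {e | G.s e = v}.Nonempty

/-- A subset `X ⊆ E⁰` is saturated if every finite emitter `v` with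
`r(s⁻¹(v)) ⊆ X` lies in `X`. -/
def Saturated (G : DGraph V Edg) (X : Set V) : Prop :=
  ∀ v, FiniteEmitter G v → (∀ e, G.s e = v → G.r e ∈ X) → v ∈ X

/-- The hereditary saturated closure of `X`: the smallest hereditary and saturated
subset of `E⁰` containing `X`. -/
def satClosure (G : DGraph V Edg) (X : Set V) : Set V :=
  ⋂₀ {Y | Hereditary G Y ∧ Saturated G Y ∧ X ⊆ Y}

/-- The consecutive edges of a path match up: `r(eᵢ) = s(eᵢ₊₁)`. -/
def IsChain (G : DGraph V Edg) (p : List Edg) : Prop :=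
  List.Chain' (fun e f => G.r e = G.s f) p

/-- `p` is a closed path (of length ≥ 1) based at `v`. -/
def IsClosedPathAt (G : DGraph V Edg) (p : List Edg) (v : V) : Prop :=
  ∃ hne : p ≠ [], IsChain G p ∧ G.s (p.head hne) = v ∧ G.r (p.getLast hne) = v

/-- `p` is a closed path (of length ≥ 1). -/
def IsClosedPath (G : DGraph V Edg) (p : List Edg) : Prop := ∃ v, IsClosedPathAt G p v

/-- The vertex set `α⁰ = {s(e₁), …, s(eₙ)}` of a path. -/
def pathVerts (G : DGraph V Edg) (p : List Edg) : Set V := {w | ∃ e ∈ p, G.s e = w}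

/-- An exit of a closed path `e₁⋯eₙ` is an edge `f` with `s(f) = s(eᵢ)` and
`f ≠ eᵢ` for some `i`. -/
def IsExitOf (G : DGraph V Edg) (f : Edg) (p : List Edg) : Prop :=
  ∃ e ∈ p, G.s f = G.s e ∧ f ≠ e

/-- `p` is a simple closed path based at `v`: a closed path whose sources are
pairwise distinct. -/
def IsSimpleClosedPathAt (G : DGraph V Edg) (p : List Edg) (v : V) : Prop :=
  IsClosedPathAt G p v ∧ (p.map G.s).Nodup

end DGraph

/-! The vertices from which only finite emitters can be reached form a hereditary saturated
set. Each vertex of a closed path without exit emits exactly one edge, and those vertices are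
closed under following edges, so they lie in this set; it is therefore nonempty, hence all of
`E⁰`. -/

namespace DGraph

variable {V Edg : Type*} {G : DGraph V Edg}

theorem Hereditary.mem_of_reaches {X : Set V} (hX : G.Hereditary X) {w u : V} (hw : w ∈ X)
    (h : G.Reaches w u) : u ∈ X := by
  induction h with
  | refl => exact hw
  | tail _ hadj ih =>
    obtain ⟨e, rfl, rfl⟩ := hadj
    exact hX e ih

def rowFiniteBelow (G : DGraph V Edg) : Set V :=
  {w | ∀ u, G.Reaches w u → {e | G.s e = u}.Finite}

theorem hereditary_rowFiniteBelow : G.Hereditary G.rowFiniteBelow :=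
  fun e he u hu => he u (Relation.ReflTransGen.head ⟨e, rfl, rfl⟩ hu)

theorem saturated_rowFiniteBelow : G.Saturated G.rowFiniteBelow := by
  intro w hw hrange u hu
  rcases Relation.ReflTransGen.cases_head hu with rfl | ⟨b, ⟨e, hse, rfl⟩, hb⟩
  · exact hw.1
  · exact hrange e hse u hb

theorem Hereditary.subset_rowFiniteBelow {X : Set V} (hX : G.Hereditary X)
    (hfin : ∀ u ∈ X, {e | G.s e = u}.Finite) : X ⊆ G.rowFiniteBelow :=
  fun _ hw u hu => hfin u (hX.mem_of_reaches hw hu)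

theorem IsClosedPathAt.mem_pathVerts {p : List Edg} {v : V} (hp : G.IsClosedPathAt p v) :
    v ∈ G.pathVerts p := by
  obtain ⟨hne, -, hhead, -⟩ := hp
  exact ⟨p.head hne, List.head_mem hne, hhead⟩

theorem IsClosedPathAt.range_mem_pathVerts {p : List Edg} {v : V} (hp : G.IsClosedPathAt p v)
    {e : Edg} (he : e ∈ p) : G.r e ∈ G.pathVerts p := by
  obtain ⟨hne, hchain, hhead, hlast⟩ := hp
  obtain ⟨i, hi, rfl⟩ := List.getElem_of_mem he
  by_cases hnext : i + 1 < p.length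
  · exact ⟨p[i + 1], List.getElem_mem _, (hchain.getElem i hnext).symm⟩
  · have hi_last : p[i] = p.getLast hne := by
      rw [List.getLast_eq_getElem]
      congr
      omega
    exact ⟨p.head hne, List.head_mem hne, by rw [hhead, hi_last, hlast]⟩

theorem eq_of_source_eq_of_forall_not_isExitOf {p : List Edg} (hp : ∀ f, ¬ G.IsExitOf f p)
    {e f : Edg} (he : e ∈ p) (hfe : G.s f = G.s e) : f = e := by
  by_contra hne
  exact hp f ⟨e, he, hfe, hne⟩

theorem IsClosedPathAt.hereditary_pathVerts {p : List Edg} {v : V} (hp : G.IsClosedPathAt p v)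
    (hno : ∀ f, ¬ G.IsExitOf f p) : G.Hereditary (G.pathVerts p) := by
  rintro f ⟨e, he, hfe⟩
  rw [eq_of_source_eq_of_forall_not_isExitOf hno he hfe.symm]
  exact hp.range_mem_pathVerts he

theorem finite_source_of_mem_pathVerts {p : List Edg} (hno : ∀ f, ¬ G.IsExitOf f p) {u : V}
    (hu : u ∈ G.pathVerts p) : {f | G.s f = u}.Finite := by
  obtain ⟨e, he, rfl⟩ := hu
  exact (Set.finite_singleton e).subset
    fun f hf => eq_of_source_eq_of_forall_not_isExitOf hno he hf

end DGraph

/-- if the only hereditary and saturated subsets of `E⁰` are `∅` and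
`E⁰`, and `E` contains a closed path with no exit, then `E` is row-finite. -/
theorem stmt6 {V Edg : Type*} (G : DGraph V Edg)
    (htriv : ∀ X : Set V, G.Hereditary X → G.Saturated X → X = ∅ ∨ X = Set.univ)
    (α : List Edg) (hα : G.IsClosedPath α) (hnoexit : ∀ f, ¬ G.IsExitOf f α) :
    ∀ v : V, {e | G.s e = v}.Finite := by
  obtain ⟨v, hv⟩ := hα
  have hcycle : G.pathVerts α ⊆ G.rowFiniteBelow :=
    (hv.hereditary_pathVerts hnoexit).subset_rowFiniteBelow
      fun _ => DGraph.finite_source_of_mem_pathVerts hnoexit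
  rcases htriv _ DGraph.hereditary_rowFiniteBelow DGraph.saturated_rowFiniteBelow with h | h
  · exact absurd (hcycle hv.mem_pathVerts) (h ▸ Set.notMem_empty v)
  · intro w
    exact (h ▸ Set.mem_univ w : w ∈ G.rowFiniteBelow) w .refl
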